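/- arXiv:1307.6478 — 2 statements merged into one kernel-verified Lean document; each statement's English description precedes it below -/
import Mathlib

section
/- Let G and H be topological groups with H ⊆ G a subgroup of index 2, and let x ∈ G ∖ H. Let r be a continuous finite-dimensional irreducible complex representation of H, and define its twist r^x by r^x(h) = r(x h x^{−1}). Then r extends to a continuous representation of G (i.e., there exists a continuous representation ρ of G on the same space with ρ|_H = r) if and only if r is isomorphic to r^x. -/
/-- A (finite-dimensional, matrix) representation of a group `G` is irreducible if the
underlying space is nonzero and the only invariant subspaces are `⊥` and `⊤`. -/
def MatIrred {G ι : Type*} [Group G] [Fintype ι] [DecidableEq ι]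
    (r : G →* Matrix ι ι ℂ) : Prop :=
  Nonempty ι ∧ ∀ U : Submodule ℂ (ι → ℂ),
    (∀ g : G, ∀ v ∈ U, (r g).mulVec v ∈ U) → U = ⊥ ∨ U = ⊤

/-- `r` is isomorphic to its twist `r^x`, where `r^x (h) = r (x * h * x⁻¹)`:  there is an
invertible intertwining matrix `P` with `r^x (h) * P = P * r h` for all `h ∈ H`. -/
def TwistIso {G : Type*} [Group G] (H : Subgroup G) (x : G) {ι : Type*} [Fintype ι]
    [DecidableEq ι] (r : ↥H →* Matrix ι ι ℂ) : Prop :=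
  ∃ P : Matrix ι ι ℂ, IsUnit P ∧
    ∀ (h : G) (hh : h ∈ H) (hh' : x * h * x⁻¹ ∈ H),
      r ⟨x * h * x⁻¹, hh'⟩ * P = P * r ⟨h, hh⟩

/-!
If `ρ` extends `r`, then `ρ x` intertwines `r` with its twist. For the converse, the closure of
an index-two subgroup `H` is `H` or `G`, so `H` is either closed, hence open, or dense.

If `H` is dense, every continuous matrix representation of `H` extends: `r` maps the trace on
`H` of a neighbourhood filter of `g ∈ G` to a Cauchy filter, since
`r h - r h' = (r (h h'⁻¹) - 1) r h'` with `r h'` eventually bounded. Hence `r` extends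
continuously by density, and the extension is multiplicative by continuity.

If `H` is open and `P` intertwines `r` with `r^x`, then `r (x²)⁻¹ P²` commutes with `r`, so by
Schur's lemma it is a nonzero scalar; after rescaling, `P² = r (x²)`, and `h x ↦ r h * P`
extends `r` to a homomorphism on `G`, continuous because it is continuous near `1`.
-/

open Filter Topology

namespace Subgroup

variable {G : Type*} [Group G] {H : Subgroup G} {x : G}

theorem mul_inv_mem_of_index_two (hH : H.index = 2) (hx : x ∉ H) {g : G} (hg : g ∉ H) :
    g * x⁻¹ ∈ H := by
  rw [mul_mem_iff_of_index_two hH]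
  exact iff_of_false hg (by rwa [inv_mem_iff])

theorem isClosed_or_dense_of_index_prime [TopologicalSpace G] [IsTopologicalGroup G]
    (H : Subgroup G) (hH : H.index.Prime) :
    IsClosed (H : Set G) ∨ Dense (H : Set G) := by
  by_cases hcl : H.topologicalClosure = H
  · left
    rw [← hcl]
    exact H.isClosed_topologicalClosure
  · right
    have : H.FiniteIndex := ⟨hH.ne_zero⟩
    have hlt := H.index_strictAnti (H.le_topologicalClosure.lt_of_ne' hcl)
    have htop : H.topologicalClosure = ⊤ := by
      rcases hH.eq_one_or_self_of_dvd _ (H.index_dvd_of_le H.le_topologicalClosure) with h | h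
      · exact index_eq_one.mp h
      · omega
    rw [dense_iff_closure_eq, ← topologicalClosure_coe, htop, coe_top]

end Subgroup

section NormedRing

variable {K R : Type*} [Group K] [NormedRing R]

theorem MonoidHom.isBoundedUnder_norm_of_tendsto_mul_inv {F : Filter K} [F.NeBot] (r : K →* R)
    (hF : Tendsto (fun p : K × K => r (p.1 * p.2⁻¹)) (F ×ˢ F) (𝓝 1)) :
    IsBoundedUnder (· ≤ ·) F (fun k => ‖r k‖) := by
  have hev : ∀ᶠ p in F ×ˢ F, ‖r (p.1 * p.2⁻¹)‖ < ‖(1 : R)‖ + 1 :=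
    (continuous_norm.tendsto _).comp hF |>.eventually_lt_const (lt_add_one _)
  obtain ⟨S₁, hS₁, S₂, hS₂, hsub⟩ := mem_prod_iff.mp hev
  obtain ⟨k₀, hk₀⟩ := nonempty_of_mem hS₂
  refine ⟨(‖(1 : R)‖ + 1) * ‖r k₀‖,
    eventually_map.mpr (mem_of_superset hS₁ fun k hk => ?_)⟩
  calc ‖r k‖ = ‖r (k * k₀⁻¹) * r k₀‖ := by rw [← map_mul, inv_mul_cancel_right]
    _ ≤ ‖r (k * k₀⁻¹)‖ * ‖r k₀‖ := norm_mul_le _ _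
    _ ≤ (‖(1 : R)‖ + 1) * ‖r k₀‖ := by
      gcongr
      exact (hsub (Set.mk_mem_prod hk hk₀)).le

theorem MonoidHom.cauchy_map_of_tendsto_mul_inv [TopologicalSpace K] {F : Filter K} [F.NeBot]
    (r : K →* R) (hr : ContinuousAt r 1)
    (hF : Tendsto (fun p : K × K => p.1 * p.2⁻¹) (F ×ˢ F) (𝓝 1)) :
    Cauchy (map r F) := by
  have hr1 : Tendsto (fun p : K × K => r (p.1 * p.2⁻¹)) (F ×ˢ F) (𝓝 1) := by
    have := hr.tendsto.comp hF
    rwa [map_one] at this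
  have hsub : ∀ p : K × K, r p.1 - r p.2 = (r (p.1 * p.2⁻¹) - 1) * r p.2 := fun p => by
    rw [sub_mul, one_mul, ← map_mul, inv_mul_cancel_right]
  rw [IsUniformAddGroup.cauchy_map_iff_tendsto]
  refine ⟨‹_›, ?_⟩
  simp only [hsub]
  refine Tendsto.zero_mul_isBoundedUnder_le ?_ ?_
  · simpa only [sub_self] using hr1.sub_const 1
  · exact tendsto_snd.isBoundedUnder_comp (r.isBoundedUnder_norm_of_tendsto_mul_inv hr1)

end NormedRing

section DenseExtension

variable {G R : Type*} [Group G] [TopologicalSpace G] [IsTopologicalGroup G]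
  [NormedRing R] [CompleteSpace R] {H : Subgroup G}

theorem MonoidHom.exists_tendsto_comap_nhds_of_dense (hd : Dense (H : Set G)) (r : H →* R)
    (hr : ContinuousAt r 1) (g : G) : ∃ c, Tendsto r (comap (↑) (𝓝 g)) (𝓝 c) := by
  have : (comap ((↑) : H → G) (𝓝 g)).NeBot := hd.isDenseInducing_val.comap_nhds_neBot g
  have hval : Tendsto ((↑) : H → G) (comap (↑) (𝓝 g)) (𝓝 g) := tendsto_comap
  have hF : Tendsto (fun p : H × H => p.1 * p.2⁻¹)
      (comap (↑) (𝓝 g) ×ˢ comap (↑) (𝓝 g)) (𝓝 1) := by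
    rw [tendsto_subtype_rng]
    simpa using (hval.comp tendsto_fst).mul (hval.comp tendsto_snd).inv
  exact CompleteSpace.complete (r.cauchy_map_of_tendsto_mul_inv hr hF)

theorem MonoidHom.exists_continuous_extension_of_dense (hd : Dense (H : Set G)) (r : H →* R)
    (hr : Continuous r) : ∃ ρ : G →* R, Continuous ρ ∧ ∀ h : H, ρ h = r h := by
  have di := hd.isDenseInducing_val
  have hρ : Continuous (di.extend r) :=
    di.continuous_extend (r.exists_tendsto_comap_nhds_of_dense hd hr.continuousAt)
  have hext : ∀ h : H, di.extend r h = r h := di.extend_eq hr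
  have hmul : (fun p : G × G => di.extend r (p.1 * p.2)) =
      fun p => di.extend r p.1 * di.extend r p.2 :=
    Continuous.ext_on (hd.prod hd) (hρ.comp continuous_mul)
      ((hρ.comp continuous_fst).mul (hρ.comp continuous_snd)) fun p hp => by
        have := hext (⟨p.1, hp.1⟩ * ⟨p.2, hp.2⟩)
        rw [map_mul, ← hext, ← hext] at this
        exact this
  refine ⟨⟨⟨di.extend r, ?_⟩, fun a b => congrFun hmul (a, b)⟩, hρ, hext⟩
  exact (hext 1).trans r.map_one

end DenseExtension

namespace MonoidHom

variable {G M : Type*} [Group G] [Monoid M] {H : Subgroup G} [H.Normal] {x : G}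

noncomputable def extendOfIndexTwo (hH : H.index = 2) (hx : x ∉ H) (r : H →* M) (P : M)
    (hconj : ∀ h : H, P * r h = r (MulAut.conjNormal x h) * P)
    (hsq : P * P = r ⟨x * x, H.mul_self_mem_of_index_two hH x⟩) : G →* M := by
  classical
  refine
    { toFun := fun g => if hg : g ∈ H then r ⟨g, hg⟩
        else r ⟨g * x⁻¹, H.mul_inv_mem_of_index_two hH hx hg⟩ * P
      map_one' := (dif_pos H.one_mem).trans r.map_one
      map_mul' := fun g k => ?_ }
  have hmul := H.mul_mem_iff_of_index_two hH (a := g) (b := k)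
  split_ifs with hgk hg hk hk hg hk hk
  · rw [← map_mul]; rfl
  · tauto
  · tauto
  · -- `g k = (g x⁻¹) (x (k x⁻¹) x⁻¹) (x x)`: the only case where `hsq` is needed.
    rw [mul_assoc, ← mul_assoc P, hconj, mul_assoc, hsq, ← mul_assoc, ← map_mul, ← map_mul]
    congr 1; ext; simp; group
  · tauto
  · rw [← mul_assoc, ← map_mul]
    congr 2; ext; simp [mul_assoc]
  · rw [mul_assoc _ P, hconj, ← mul_assoc, ← map_mul]
    congr 2; ext; simp; group
  · tauto

variable (hH : H.index = 2) (hx : x ∉ H) (r : H →* M) (P : M)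
  (hconj : ∀ h : H, P * r h = r (MulAut.conjNormal x h) * P)
  (hsq : P * P = r ⟨x * x, H.mul_self_mem_of_index_two hH x⟩)

@[simp]
theorem extendOfIndexTwo_apply_coe (h : H) : extendOfIndexTwo hH hx r P hconj hsq h = r h :=
  dif_pos h.2

theorem continuous_extendOfIndexTwo [TopologicalSpace G] [IsTopologicalGroup G]
    [TopologicalSpace M] [ContinuousMul M] (hopen : IsOpen (H : Set G)) (hr : Continuous r) :
    Continuous (extendOfIndexTwo hH hx r P hconj hsq) := by
  refine continuous_of_continuousAt_one _ ?_
  have hcomp : extendOfIndexTwo hH hx r P hconj hsq ∘ ((↑) : H → G) = r :=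
    funext (extendOfIndexTwo_apply_coe hH hx r P hconj hsq)
  rw [← H.coe_one, ← hopen.isOpenEmbedding_subtypeVal.continuousAt_iff]
  exact hcomp ▸ hr.continuousAt

end MonoidHom

section MatrixRepresentation

variable {G ι : Type*} [Group G] [Fintype ι] [DecidableEq ι]

theorem MatIrred.exists_eq_smul_one_of_commute {r : G →* Matrix ι ι ℂ} (hirr : MatIrred r)
    (A : Matrix ι ι ℂ) (hA : ∀ g, A * r g = r g * A) : ∃ c : ℂ, A = c • 1 := by
  have : Nonempty ι := hirr.1
  obtain ⟨c, hc⟩ := Module.End.exists_eigenvalue (Matrix.toLin' A)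
  have hinv : ∀ g, ∀ v ∈ Module.End.eigenspace (Matrix.toLin' A) c,
      (r g).mulVec v ∈ Module.End.eigenspace (Matrix.toLin' A) c := by
    intro g v hv
    rw [Module.End.mem_eigenspace_iff, Matrix.toLin'_apply] at hv ⊢
    rw [Matrix.mulVec_mulVec, hA, ← Matrix.mulVec_mulVec, hv, Matrix.mulVec_smul]
  have htop := (hirr.2 _ hinv).resolve_left hc
  refine ⟨c, Matrix.toLin'.injective (LinearMap.ext fun v => ?_)⟩
  have hv : v ∈ Module.End.eigenspace (Matrix.toLin' A) c := htop ▸ Submodule.mem_top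
  rw [Module.End.mem_eigenspace_iff] at hv
  simpa using hv

theorem TwistIso.of_extension {H : Subgroup G} (x : G) {r : H →* Matrix ι ι ℂ}
    (ρ : G →* Matrix ι ι ℂ) (hρ : ∀ h : H, ρ h = r h) : TwistIso H x r :=
  ⟨ρ x, (Group.isUnit x).map ρ, fun h hh hh' => by
    rw [← hρ, ← hρ, ← map_mul, ← map_mul]
    congr 1
    group⟩

/-- Schur's lemma makes `r a⁻¹ * P * P` a nonzero scalar, which a square root rescales away. -/
theorem MatIrred.exists_intertwiner_mul_self_eq {H : Subgroup G} [H.Normal]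
    {r : H →* Matrix ι ι ℂ} (hirr : MatIrred r) {x : G} (ht : TwistIso H x r) {a : H}
    (ha : (a : G) = x * x) :
    ∃ Q, (∀ h : H, Q * r h = r (MulAut.conjNormal x h) * Q) ∧ Q * Q = r a := by
  obtain ⟨P, hPu, hP⟩ := ht
  have hconj : ∀ h : H, P * r h = r (MulAut.conjNormal x h) * P := fun h =>
    (hP h h.2 (MulAut.conjNormal x h).2).symm
  have hconj2 : ∀ h : H, MulAut.conjNormal x (MulAut.conjNormal x h) = a * h * a⁻¹ :=
    fun h => by
      ext
      simp [ha]
      group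
  have hPP : ∀ h, P * P * r h = r (a * h * a⁻¹) * (P * P) := fun h => by
    rw [mul_assoc, hconj, ← mul_assoc, hconj, hconj2, mul_assoc]
  have hcomm : ∀ h, r a⁻¹ * (P * P) * r h = r h * (r a⁻¹ * (P * P)) := fun h => by
    rw [mul_assoc, hPP, ← mul_assoc, ← map_mul, ← mul_assoc (r h), ← map_mul]
    rw [show a⁻¹ * (a * h * a⁻¹) = h * a⁻¹ by group]
  obtain ⟨c, hc⟩ := hirr.exists_eq_smul_one_of_commute _ hcomm
  have : Nonempty ι := hirr.1
  have hc0 : c ≠ 0 := by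
    rintro rfl
    rw [zero_smul] at hc
    exact not_isUnit_zero (hc ▸ ((Group.isUnit a⁻¹).map r).mul (hPu.mul hPu))
  have hPP' : P * P = c • r a := calc
    P * P = r a * (r a⁻¹ * (P * P)) := by
      rw [← mul_assoc, ← map_mul, mul_inv_cancel, map_one, one_mul]
    _ = c • r a := by rw [hc, mul_smul_comm, mul_one]
  obtain ⟨s, rfl⟩ := IsAlgClosed.exists_eq_mul_self c
  have hs : s ≠ 0 := by rintro rfl; simp at hc0
  refine ⟨s⁻¹ • P, fun h => by rw [smul_mul_assoc, mul_smul_comm, hconj], ?_⟩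
  rw [smul_mul_smul_comm, hPP', smul_smul, show s⁻¹ * s⁻¹ * (s * s) = 1 by field_simp,
    one_smul]

end MatrixRepresentation

/-- For an index-two subgroup `H ⊆ G` of a topological group, `x ∈ G \ H`, and a
continuous finite-dimensional irreducible complex representation `r` of `H`, the representation
`r` extends to a continuous representation of `G` iff `r` is isomorphic to its twist `r^x`. -/
theorem stmt_2 {G : Type*} [Group G] [TopologicalSpace G] [IsTopologicalGroup G]
    (H : Subgroup G) (hH : H.index = 2) (x : G) (hx : x ∉ H)
    {n : ℕ} (r : ↥H →* Matrix (Fin n) (Fin n) ℂ)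
    (hcont : Continuous r) (hirr : MatIrred r) :
    (∃ ρ : G →* Matrix (Fin n) (Fin n) ℂ, Continuous ρ ∧ ∀ h : ↥H, ρ ↑h = r h)
      ↔ TwistIso H x r := by
  have : H.Normal := Subgroup.normal_of_index_eq_two hH
  refine ⟨fun ⟨ρ, _, hρ⟩ => TwistIso.of_extension x ρ hρ, fun ht => ?_⟩
  rcases H.isClosed_or_dense_of_index_prime (hH ▸ Nat.prime_two) with hcl | hd
  · have : H.FiniteIndex := ⟨by omega⟩
    obtain ⟨Q, hconj, hsq⟩ := hirr.exists_intertwiner_mul_self_eq ht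
      (a := ⟨x * x, H.mul_self_mem_of_index_two hH x⟩) rfl
    exact ⟨_, MonoidHom.continuous_extendOfIndexTwo hH hx r Q hconj hsq
      (H.isOpen_of_isClosed_of_finiteIndex hcl) hcont,
      MonoidHom.extendOfIndexTwo_apply_coe hH hx r Q hconj hsq⟩
  · -- The instances are passed explicitly: the uniformity of the operator norm agrees with the
    -- product uniformity of matrices only after unfolding.
    exact @MonoidHom.exists_continuous_extension_of_dense _ _ _ _ _ Matrix.linftyOpNormedRing
      (Matrix.instCompleteSpace _ _ _) _ hd r hcont
end

section
/- Let n ∈ {2, 3, 4, 6}, ζ = e^{πi/n}, and let ι : U(2) → GL₄(ℂ) be the homomorphism A ↦ diag(A, Ā). Let E_n be the subgroup of GL₄(ℂ) generated by ι(SU(2)) and z := diag(ζ, ζ, ζ̄, ζ̄), and let J(E_n) be the subgroup generated by E_n and the matrix J (the block matrix with 2×2 blocks: top-right block J₂, bottom-left block −J₂, zero diagonal blocks, where J₂ has rows (0,1) and (−1,0)); E_n has index 2 in J(E_n). For an integer k ≥ 0 and a residue class w modulo 2n with k ≡ w (mod 2), let r_{k,w} be the irreducible continuous representation of E_n determined by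 r_{k,w}(ι(A)·z^j) = ζ^{jw} · Sym^k(St)(A) for A ∈ SU(2) and j ∈ ℤ (this is well defined since z^n = ι(−I₂) and k ≡ w mod 2). Then the twist of r_{k,w} by conjugation by J is isomorphic to r_{k,−w}, and consequently r_{k,w} extends to a continuous representation of J(E_n) if and only if w ≡ 0 (mod 2n) or w ≡ n (mod 2n). -/
noncomputable section

/-- The set of elements of `SU(2)`, as `2 × 2` complex matrices. -/
def SU2Set : Set (Matrix (Fin 2) (Fin 2) ℂ) := {A | star A * A = 1 ∧ A.det = 1}

/-- The group `SU(2)`, as a subgroup of `GL₂(ℂ)`. -/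
def SU2 : Subgroup (Matrix (Fin 2) (Fin 2) ℂ)ˣ :=
  Subgroup.closure {u | (u : Matrix (Fin 2) (Fin 2) ℂ) ∈ SU2Set}

/-- The embedding `ι : U(2) → GL₄(ℂ)`, `A ↦ diag(A, Ā)` (as a map of matrices). -/
def iotaMat (A : Matrix (Fin 2) (Fin 2) ℂ) : Matrix (Fin 4) (Fin 4) ℂ :=
  Matrix.reindex finSumFinEquiv finSumFinEquiv
    (Matrix.fromBlocks A 0 0 (A.map (starRingEnd ℂ)))

/-- `ζ = e^{πi/n}`. -/
def zeta (n : ℕ) : ℂ := Complex.exp (Real.pi * Complex.I / n)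

/-- The diagonal matrix `z = diag(ζ, ζ, ζ̄, ζ̄)`. -/
def zMat (n : ℕ) : Matrix (Fin 4) (Fin 4) ℂ :=
  Matrix.diagonal ![zeta n, zeta n, starRingEnd ℂ (zeta n), starRingEnd ℂ (zeta n)]

/-- The matrix `J₂`. -/
def J2Mat : Matrix (Fin 2) (Fin 2) ℂ := !![0, 1; -1, 0]

/-- The matrix `J ∈ GL₄(ℂ)`, with blocks `J = [[0, J₂], [-J₂, 0]]`. -/
def JMat : Matrix (Fin 4) (Fin 4) ℂ :=
  Matrix.reindex finSumFinEquiv finSumFinEquiv (Matrix.fromBlocks 0 J2Mat (-J2Mat) 0)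

/-- The subgroup `E_n = ⟨ι(SU(2)), z⟩` of `GL₄(ℂ)`. -/
def EnGrp (n : ℕ) : Subgroup (Matrix (Fin 4) (Fin 4) ℂ)ˣ :=
  Subgroup.closure
    ({u : (Matrix (Fin 4) (Fin 4) ℂ)ˣ | (u : Matrix (Fin 4) (Fin 4) ℂ) ∈ iotaMat '' SU2Set} ∪
     {u : (Matrix (Fin 4) (Fin 4) ℂ)ˣ | (u : Matrix (Fin 4) (Fin 4) ℂ) = zMat n})

/-- The subgroup `J(E_n) = ⟨E_n, J⟩` of `GL₄(ℂ)`. -/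
def JEnGrp (n : ℕ) : Subgroup (Matrix (Fin 4) (Fin 4) ℂ)ˣ :=
  Subgroup.closure
    ({u : (Matrix (Fin 4) (Fin 4) ℂ)ˣ | (u : Matrix (Fin 4) (Fin 4) ℂ) ∈ iotaMat '' SU2Set} ∪
     {u : (Matrix (Fin 4) (Fin 4) ℂ)ˣ | (u : Matrix (Fin 4) (Fin 4) ℂ) = zMat n} ∪
     {u : (Matrix (Fin 4) (Fin 4) ℂ)ˣ | (u : Matrix (Fin 4) (Fin 4) ℂ) = JMat})

/-! Every element of `E_n` is `ι(A) z^j = ι(ζ^j A)` with `A ∈ SU(2)`. On `SU(2)` one has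
`J₂ Ā J₂⁻¹ = A`, so conjugation by `J` fixes `ι(SU(2))` and sends `z` to `ι(ζ̄) = z⁻¹`; hence
`r_{k,w}(J u J⁻¹) = r_{k,-w}(u)`, the identity map being the isomorphism. If `ρ` extends `r_{k,w}`,
the scalar `ρ(z) = ζ^w` commutes with `ρ(J)`, so `ζ^w = ζ^{-w}`, i.e. `n ∣ w`. Conversely, if
`n ∣ w` then `r_{k,w}` is `J`-invariant, and since `J² = 1` and `E_n` has index two,
`ρ(u J^ε) := r_{k,w}(u)` is a homomorphism; it is continuous because `E_n` is open in `J(E_n)`: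
the elements of `E_n J` vanish in the top left corner. -/

open Matrix Topology

local notation "M₂" => Matrix (Fin 2) (Fin 2) ℂ
local notation "M₄" => Matrix (Fin 4) (Fin 4) ℂ

theorem isPrimitiveRoot_zeta {n : ℕ} (hn : n ≠ 0) : IsPrimitiveRoot (zeta n) (2 * n) := by
  convert Complex.isPrimitiveRoot_exp (2 * n) (by omega) using 1
  rw [zeta]
  push_cast
  field_simp

theorem zeta_ne_zero (n : ℕ) : zeta n ≠ 0 := Complex.exp_ne_zero _

theorem zeta_zpow_eq_zpow_iff {n : ℕ} (hn : n ≠ 0) {a b : ℤ} :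
    zeta n ^ a = zeta n ^ b ↔ a ≡ b [ZMOD 2 * n] := by
  rw [Int.modEq_comm, Int.modEq_iff_dvd, ← div_eq_one_iff_eq (zpow_ne_zero b (zeta_ne_zero n)),
    ← zpow_sub₀ (zeta_ne_zero n)]
  exact_mod_cast (isPrimitiveRoot_zeta hn).zpow_eq_one_iff_dvd (a - b)

theorem conj_zeta_eq_pow {n : ℕ} (hn : n ≠ 0) : starRingEnd ℂ (zeta n) = zeta n ^ (2 * n - 1) := by
  have hconj : starRingEnd ℂ (zeta n) = (zeta n)⁻¹ := by
    rw [zeta, ← Complex.exp_conj, ← Complex.exp_neg]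
    simp [map_div₀, neg_div]
  rw [hconj, eq_comm]
  refine eq_inv_of_mul_eq_one_left ?_
  rw [← pow_succ, Nat.sub_add_cancel (by omega), (isPrimitiveRoot_zeta hn).pow_eq_one]

theorem Int.modEq_neg_self_iff (n : ℕ) (w : ℤ) :
    w ≡ -w [ZMOD 2 * n] ↔ w ≡ 0 [ZMOD 2 * n] ∨ w ≡ n [ZMOD 2 * n] := by
  simp only [Int.modEq_comm (a := w), Int.modEq_iff_dvd, sub_neg_eq_add]
  constructor
  · rintro ⟨m, hm⟩
    rcases Int.even_or_odd m with ⟨q, rfl⟩ | ⟨q, rfl⟩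
    · exact Or.inl ⟨q, by linarith⟩
    · exact Or.inr ⟨q, by linarith⟩
  · rintro (⟨m, hm⟩ | ⟨m, hm⟩)
    · exact ⟨2 * m, by linarith⟩
    · exact ⟨2 * m + 1, by linarith⟩

section Extension

variable {G M : Type*} [Group G] [Monoid M] {H K : Subgroup G}

theorem Subgroup.mul_mem_iff_of_relIndex_eq_two (h : H.relIndex K = 2) {a b : G} (ha : a ∈ K)
    (hb : b ∈ K) : a * b ∈ H ↔ (a ∈ H ↔ b ∈ H) :=
  Subgroup.mul_mem_iff_of_index_two (H := H.subgroupOf K) h (a := ⟨a, ha⟩) (b := ⟨b, hb⟩)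

theorem Subgroup.exists_monoidHom_extend_of_relIndex_eq_two (hHK : H ≤ K)
    (hidx : H.relIndex K = 2) {t : G} (htK : t ∈ K) (htH : t ∉ H) (ht : t * t = 1)
    (r : H →* M) (hr : ∀ h h' : H, t * h = h' * t → r h' = r h) :
    ∃ ρ : K →* M, ∀ (x : K) (h : H), (x : G) = h → ρ x = r h := by
  classical
  have hmem {a b : G} (ha : a ∈ K) (hb : b ∈ K) := mul_mem_iff_of_relIndex_eq_two hidx ha hb
  have htt (a : G) : t * (t * a) = a := by rw [← mul_assoc, ht, one_mul]
  have hconj_mem {a : G} (ha : a ∈ H) : t * a * t ∈ H := by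
    simp [hmem (mul_mem htK (hHK ha)) htK, hmem htK (hHK ha), ha, htH]
  have hmul_t {x : G} (hxK : x ∈ K) (hx : x ∉ H) : x * t ∈ H := by simp [hmem hxK htK, hx, htH]
  let R (g : G) : M := if hg : g ∈ H then r ⟨g, hg⟩ else 1
  have hR {g : G} (hg : g ∈ H) : R g = r ⟨g, hg⟩ := dif_pos hg
  have hR_mul {a b : G} (ha : a ∈ H) (hb : b ∈ H) : R (a * b) = R a * R b := by
    rw [hR ha, hR hb, hR (mul_mem ha hb), ← map_mul]; rfl
  have hR_conj {a : G} (ha : a ∈ H) : R (t * a * t) = R a := by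
    rw [hR ha, hR (hconj_mem ha)]
    exact hr ⟨a, ha⟩ ⟨_, hconj_mem ha⟩ (by rw [mul_assoc _ t, ht, mul_one])
  -- `ρ (h * t ^ ε) = r h`, multiplicative because `r` is invariant under conjugation by `t`
  let f (x : K) : M := if (x : G) ∈ H then R x else R (x * t)
  have hf_pos {x : K} (hx : (x : G) ∈ H) : f x = R x := if_pos hx
  have hf_neg {x : K} (hx : (x : G) ∉ H) : f x = R (x * t) := if_neg hx
  have hswap (a b : G) : a * t * (t * b * t) = a * b * t := by simp [mul_assoc, htt]
  refine ⟨{ toFun := f, map_one' := ?_, map_mul' := fun x y => ?_ }, fun x h hxh => ?_⟩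
  · rw [hf_pos (by simp), Subgroup.coe_one, hR (one_mem H)]
    exact map_one r
  · have hxy := hmem x.2 y.2
    by_cases hx : (x : G) ∈ H <;> by_cases hy : (y : G) ∈ H
    · rw [hf_pos (mul_mem hx hy), hf_pos hx, hf_pos hy, Subgroup.coe_mul, hR_mul hx hy]
    · rw [hf_neg (by simp [hxy, hx, hy]), hf_pos hx, hf_neg hy, Subgroup.coe_mul, mul_assoc,
        hR_mul hx (hmul_t y.2 hy)]
    · rw [hf_neg (by simp [hxy, hx, hy]), hf_neg hx, hf_pos hy, Subgroup.coe_mul, ← hswap,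
        hR_mul (hmul_t x.2 hx) (hconj_mem hy), hR_conj hy]
    · rw [hf_pos (by simp [hxy, hx, hy]), hf_neg hx, hf_neg hy, Subgroup.coe_mul,
        ← hR_conj (hmul_t y.2 hy), ← hR_mul (hmul_t x.2 hx) (hconj_mem (hmul_t y.2 hy)), hswap,
        mul_assoc, mul_assoc, ht, mul_one]
  · show f x = r h
    rw [hf_pos (hxh ▸ h.2), hR (hxh ▸ h.2)]
    exact congrArg r (Subtype.ext hxh)

theorem MonoidHom.continuous_of_extends {G M : Type*} [Group G] [TopologicalSpace G]
    [IsTopologicalGroup G] [Monoid M] [TopologicalSpace M] [ContinuousMul M] {H K : Subgroup G}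
    (hH : {x : K | (x : G) ∈ H} ∈ 𝓝 1) {r : H →* M} (hr : Continuous r) {ρ : K →* M}
    (hρ : ∀ (x : K) (h : H), (x : G) = h → ρ x = r h) : Continuous ρ := by
  refine continuous_of_continuousAt_one ρ (ContinuousOn.continuousAt ?_ hH)
  rw [continuousOn_iff_continuous_domRestrict]
  have hval : Continuous fun x : {x : K | (x : G) ∈ H} => (⟨x.1.1, x.2⟩ : H) :=
    (continuous_subtype_val.comp continuous_subtype_val).subtype_mk _
  exact (hr.comp hval).congr fun x => (hρ x.1 ⟨x.1.1, x.2⟩ rfl).symm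

end Extension

theorem finSumFinEquiv_symm_fin_four :
    ⇑(finSumFinEquiv.symm : Fin (2 + 2) ≃ Fin 2 ⊕ Fin 2) = ![.inl 0, .inl 1, .inr 0, .inr 1] := by
  ext i; fin_cases i <;> rfl

theorem iotaMat_mul (A B : M₂) : iotaMat (A * B) = iotaMat A * iotaMat B := by
  simp [iotaMat, fromBlocks_multiply, Matrix.map_mul]

theorem iotaMat_one : iotaMat 1 = 1 := by
  simp [iotaMat]

def iotaHom : M₂ →* M₄ where
  toFun := iotaMat
  map_one' := iotaMat_one
  map_mul' := iotaMat_mul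

theorem iotaMat_pow (A : M₂) (j : ℕ) : iotaMat (A ^ j) = iotaMat A ^ j := map_pow iotaHom A j

theorem zMat_eq_iotaMat (n : ℕ) : zMat n = iotaMat (zeta n • 1) := by
  ext i j
  fin_cases i <;> fin_cases j <;> simp [iotaMat, zMat, finSumFinEquiv_symm_fin_four]

theorem iotaMat_smul_eq_mul_zMat_pow (n j : ℕ) (A : M₂) :
    iotaMat (zeta n ^ j • A) = iotaMat A * zMat n ^ j := by
  rw [zMat_eq_iotaMat, ← iotaMat_pow, ← iotaMat_mul, smul_pow, one_pow, Matrix.mul_smul, mul_one]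

theorem JMat_mul_self : JMat * JMat = 1 := by
  have : J2Mat * J2Mat = -1 := by
    ext i j; fin_cases i <;> fin_cases j <;> simp [J2Mat]
  simp [JMat, fromBlocks_multiply, this]

theorem JMat_mul_iotaMat_of {B C : M₂} (h : J2Mat * B.map (starRingEnd ℂ) = C * J2Mat) :
    JMat * iotaMat B = iotaMat C * JMat := by
  have hJ : J2Mat.map (starRingEnd ℂ) = J2Mat := by
    ext i j; fin_cases i <;> fin_cases j <;> simp [J2Mat]
  have h' : J2Mat * B = C.map (starRingEnd ℂ) * J2Mat := by
    simpa [Matrix.map_mul, Matrix.map_map, Function.comp_def, hJ] using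
      congrArg (Matrix.map · (starRingEnd ℂ)) h
  simp [JMat, iotaMat, fromBlocks_multiply, h, h']

theorem J2Mat_mul_map_conj {A : M₂} (hA : A ∈ specialUnitaryGroup (Fin 2) ℂ) :
    J2Mat * A.map (starRingEnd ℂ) = A * J2Mat := by
  rw [mem_specialUnitaryGroup_iff, mem_unitaryGroup_iff'] at hA
  have hadj : star A = A.adjugate := by
    rw [← Matrix.inv_eq_left_inv hA.1, Matrix.inv_def, hA.2]; simp
  have h := fun i j => congrFun (congrFun hadj i) j
  simp only [adjugate_fin_two, star_apply, Fin.forall_fin_two, of_apply, cons_val', cons_val_zero,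
    cons_val_one, empty_val', cons_val_fin_one, RCLike.star_def] at h
  obtain ⟨⟨h00, h10⟩, h01, h11⟩ := h
  ext i j
  fin_cases i <;> fin_cases j <;> simp [J2Mat, mul_apply, Fin.sum_univ_two, h00, h10, h01, h11]

theorem JMat_mul_iotaMat_smul_mul_JMat {A : M₂} (hA : A ∈ specialUnitaryGroup (Fin 2) ℂ) (c : ℂ) :
    JMat * iotaMat (c • A) * JMat = iotaMat (starRingEnd ℂ c • A) := by
  have h : J2Mat * (c • A).map (starRingEnd ℂ) = (starRingEnd ℂ c • A) * J2Mat := by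
    rw [Matrix.map_smul' _ _ _ (map_mul _), Matrix.mul_smul, J2Mat_mul_map_conj hA, Matrix.smul_mul]
  rw [JMat_mul_iotaMat_of h, mul_assoc, JMat_mul_self, mul_one]

theorem JMat_mul_mul_JMat_eq {n : ℕ} (hn : n ≠ 0) {A : M₂}
    (hA : A ∈ specialUnitaryGroup (Fin 2) ℂ) (j : ℕ) :
    JMat * (iotaMat A * zMat n ^ j) * JMat = iotaMat A * zMat n ^ ((2 * n - 1) * j) := by
  rw [← iotaMat_smul_eq_mul_zMat_pow, ← iotaMat_smul_eq_mul_zMat_pow,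
    JMat_mul_iotaMat_smul_mul_JMat hA, map_pow, conj_zeta_eq_pow hn, ← pow_mul]

theorem iotaMat_mul_JMat_apply_zero_zero (B : M₂) : (iotaMat B * JMat) 0 0 = 0 := by
  simp only [iotaMat, JMat, reindex_apply, submatrix_mul_equiv, fromBlocks_multiply]
  simp [finSumFinEquiv_symm_fin_four]

theorem mem_SU2Set_iff {A : M₂} : A ∈ SU2Set ↔ A ∈ specialUnitaryGroup (Fin 2) ℂ := by
  simp [SU2Set, mem_specialUnitaryGroup_iff, mem_unitaryGroup_iff']

theorem exists_SU2_val_eq {A : M₂} (hA : A ∈ specialUnitaryGroup (Fin 2) ℂ) :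
    ∃ a : SU2, ((a : M₂ˣ) : M₂) = A :=
  have hA' := mem_SU2Set_iff.2 hA
  ⟨⟨⟨A, star A, mul_eq_one_comm.1 hA'.1, hA'.1⟩, Subgroup.subset_closure hA'⟩, rfl⟩

def JUnit : M₄ˣ := ⟨JMat, JMat, JMat_mul_self, JMat_mul_self⟩

def zUnit (n : ℕ) : M₄ˣ := by
  refine ⟨zMat n, iotaMat ((zeta n)⁻¹ • 1), ?_, ?_⟩ <;>
    rw [zMat_eq_iotaMat, ← iotaMat_mul, smul_mul_smul_comm, one_mul] <;>
    simp [zeta_ne_zero, iotaMat_one]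

@[simp]
theorem val_JUnit : (JUnit : M₄) = JMat := rfl

@[simp]
theorem val_zUnit (n : ℕ) : (zUnit n : M₄) = zMat n := rfl

theorem JUnit_mem_JEnGrp (n : ℕ) : JUnit ∈ JEnGrp n := Subgroup.subset_closure (Or.inr rfl)

theorem zUnit_mem_EnGrp (n : ℕ) : zUnit n ∈ EnGrp n := Subgroup.subset_closure (Or.inr rfl)

theorem EnGrp_le_JEnGrp (n : ℕ) : EnGrp n ≤ JEnGrp n :=
  Subgroup.closure_mono Set.subset_union_left

theorem JUnit_notMem_EnGrp {n : ℕ} (hidx : (EnGrp n).relIndex (JEnGrp n) = 2) :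
    JUnit ∉ EnGrp n := by
  intro hJ
  have : JEnGrp n ≤ EnGrp n := by
    refine Subgroup.closure_le _ |>.2 (Set.union_subset (Subgroup.subset_closure) ?_)
    rintro u (hu : (u : M₄) = JMat)
    rwa [show u = JUnit from Units.ext hu]
  rw [Subgroup.relIndex_eq_one.2 this] at hidx
  exact absurd hidx (by norm_num)

theorem exists_eq_iotaMat_smul_of_mem_EnGrp {n : ℕ} (hn : n ≠ 0) {u : M₄ˣ} (hu : u ∈ EnGrp n) :
    ∃ A ∈ specialUnitaryGroup (Fin 2) ℂ, ∃ j : ℕ, (u : M₄) = iotaMat (zeta n ^ j • A) := by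
  induction hu using Subgroup.closure_induction'' with
  | mem u hu =>
    rcases hu with ⟨A, hA, hu⟩ | hu
    · exact ⟨A, mem_SU2Set_iff.1 hA, 0, by rw [pow_zero, one_smul, hu]⟩
    · exact ⟨1, one_mem _, 1, by rw [hu, zMat_eq_iotaMat, pow_one]⟩
  | inv_mem u hu =>
    rcases hu with ⟨A, hA, hu⟩ | hu
    · refine ⟨star A, (star ⟨A, mem_SU2Set_iff.1 hA⟩ : specialUnitaryGroup (Fin 2) ℂ).2, 0,
        Units.inv_eq_of_mul_eq_one_left ?_⟩
      rw [pow_zero, one_smul, ← hu, ← iotaMat_mul, hA.1, iotaMat_one]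
    · refine ⟨1, one_mem _, 2 * n - 1, Units.inv_eq_of_mul_eq_one_left ?_⟩
      rw [hu, zMat_eq_iotaMat, ← iotaMat_mul, smul_mul_smul_comm, ← pow_succ,
        Nat.sub_add_cancel (by omega), (isPrimitiveRoot_zeta hn).pow_eq_one, one_mul, one_smul,
        iotaMat_one]
  | one => exact ⟨1, one_mem _, 0, by simp [iotaMat_one]⟩
  | mul u v _ _ hu hv =>
    obtain ⟨A, hA, j, hu⟩ := hu
    obtain ⟨B, hB, l, hv⟩ := hv
    exact ⟨A * B, mul_mem hA hB, j + l, by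
      rw [Units.val_mul, hu, hv, ← iotaMat_mul, smul_mul_smul_comm, pow_add]⟩

theorem setOf_mem_EnGrp_mem_nhds {n : ℕ} (hn : n ≠ 0)
    (hidx : (EnGrp n).relIndex (JEnGrp n) = 2) :
    {x : JEnGrp n | (x : M₄ˣ) ∈ EnGrp n} ∈ 𝓝 1 := by
  have hcont : Continuous fun x : JEnGrp n => ((x : M₄ˣ) : M₄) 0 0 := by fun_prop
  refine Filter.mem_of_superset ((isOpen_ne_fun hcont continuous_const).mem_nhds
    (by simp : ((1 : JEnGrp n) : M₄ˣ).val 0 0 ≠ 0)) fun x hx => ?_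
  by_contra hxE
  have hxJ : (x : M₄ˣ) * JUnit ∈ EnGrp n :=
    (Subgroup.mul_mem_iff_of_relIndex_eq_two hidx x.2 (JUnit_mem_JEnGrp n)).2
      (iff_of_false hxE (JUnit_notMem_EnGrp hidx))
  obtain ⟨A, -, j, hA⟩ := exists_eq_iotaMat_smul_of_mem_EnGrp hn hxJ
  have hx' : ((x : M₄ˣ) : M₄) = iotaMat (zeta n ^ j • A) * JMat := by
    rw [← hA, Units.val_mul, mul_assoc, val_JUnit, JMat_mul_self, mul_one]
  exact hx (by rw [hx']; exact iotaMat_mul_JMat_apply_zero_zero _)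

section Rkw

variable {m : Type*} [Fintype m] [DecidableEq m] {n : ℕ} {w : ℤ} {sym : SU2 →* Matrix m m ℂ}

-- `r` is the paper's `r_{k,w}`, built from `sym = Sym^k(St)`
def IsRkw (n : ℕ) (w : ℤ) (sym : SU2 →* Matrix m m ℂ) (r : EnGrp n →* Matrix m m ℂ) : Prop :=
  ∀ (u : EnGrp n) (a : SU2) (j : ℕ), ((u : M₄ˣ) : M₄) = iotaMat ((a : M₂ˣ) : M₂) * zMat n ^ j →
    r u = zeta n ^ ((j : ℤ) * w) • sym a

theorem IsRkw.apply_eq_of_JMat_mul {r r' : EnGrp n →* Matrix m m ℂ} (hn : n ≠ 0)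
    (hr : IsRkw n w sym r) (hr' : IsRkw n (-w) sym r') {u u' : EnGrp n}
    (h : JMat * ((u : M₄ˣ) : M₄) = ((u' : M₄ˣ) : M₄) * JMat) : r u' = r' u := by
  obtain ⟨A, hA, j, hu⟩ := exists_eq_iotaMat_smul_of_mem_EnGrp hn u.2
  obtain ⟨a, rfl⟩ := exists_SU2_val_eq hA
  rw [iotaMat_smul_eq_mul_zMat_pow] at hu
  have hu' : ((u' : M₄ˣ) : M₄) = iotaMat ((a : M₂ˣ) : M₂) * zMat n ^ ((2 * n - 1) * j) := by
    rw [← JMat_mul_mul_JMat_eq hn hA, ← hu, h, mul_assoc, JMat_mul_self, mul_one]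
  rw [hr u' a _ hu', hr' u a j hu, (zeta_zpow_eq_zpow_iff hn).2]
  refine Int.modEq_iff_dvd.2 ⟨-(j * w), ?_⟩
  push_cast [Nat.cast_sub (show 1 ≤ 2 * n by omega)]
  ring

theorem IsRkw.neg {r : EnGrp n →* Matrix m m ℂ} (hn : n ≠ 0) (hw : w ≡ -w [ZMOD 2 * n])
    (hr : IsRkw n w sym r) : IsRkw n (-w) sym r := fun u a j hu => by
  rw [hr u a j hu, (zeta_zpow_eq_zpow_iff hn).2 (hw.mul_left _)]

theorem IsRkw.modEq_neg_of_extends [Nonempty m] {r : EnGrp n →* Matrix m m ℂ} (hn : n ≠ 0)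
    (hr : IsRkw n w sym r) {ρ : JEnGrp n →* Matrix m m ℂ}
    (hρ : ∀ (x : JEnGrp n) (u : EnGrp n), (x : M₄ˣ) = u → ρ x = r u) :
    w ≡ -w [ZMOD 2 * n] := by
  let z : JEnGrp n := ⟨zUnit n, EnGrp_le_JEnGrp n (zUnit_mem_EnGrp n)⟩
  let J : JEnGrp n := ⟨JUnit, JUnit_mem_JEnGrp n⟩
  have hz (j : ℕ) : ρ (z ^ j) = zeta n ^ ((j : ℤ) * w) • 1 := by
    rw [hρ (z ^ j) (⟨zUnit n, zUnit_mem_EnGrp n⟩ ^ j) rfl, hr _ 1 j (by simp [iotaMat_one]),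
      map_one]
  have hJ : ρ J * ρ J = 1 := by
    rw [← map_mul, show J * J = 1 from Subtype.ext (Units.ext JMat_mul_self), map_one]
  have hJzJ : J * z * J = z ^ (2 * n - 1) := by
    refine Subtype.ext <| Units.ext ?_
    simpa [iotaMat_one, J, z, Units.val_pow_eq_pow_val] using
      JMat_mul_mul_JMat_eq hn (one_mem _) 1
  have hscalar : zeta n ^ (((2 * n - 1 : ℕ) : ℤ) * w) • (1 : Matrix m m ℂ)
      = zeta n ^ (((1 : ℕ) : ℤ) * w) • 1 := by
    rw [← hz, ← hJzJ, map_mul, map_mul, ← pow_one z, hz, mul_smul_comm, smul_mul_assoc, mul_one,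
      hJ]
  obtain ⟨c, hc⟩ := Int.modEq_iff_dvd.1 <|
    (zeta_zpow_eq_zpow_iff hn).1 (smul_left_injective ℂ one_ne_zero hscalar)
  refine Int.modEq_iff_dvd.2 ⟨-(c + w), ?_⟩
  push_cast [Nat.cast_sub (show 1 ≤ 2 * n by omega)] at hc
  linear_combination -hc

end Rkw

theorem stmt_11_general (n : ℕ) (hn : n = 2 ∨ n = 3 ∨ n = 4 ∨ n = 6)
    (hidx : Subgroup.relIndex (EnGrp n) (JEnGrp n) = 2)
    (k : ℕ) (w : ℤ)
    (sym : ↥SU2 →* Matrix (Fin (k + 1)) (Fin (k + 1)) ℂ)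
    (r : ↥(EnGrp n) →* Matrix (Fin (k + 1)) (Fin (k + 1)) ℂ) (hcr : Continuous r)
    (hr : ∀ (u : ↥(EnGrp n)) (a : ↥SU2) (j : ℕ),
      ((u : (Matrix (Fin 4) (Fin 4) ℂ)ˣ) : Matrix (Fin 4) (Fin 4) ℂ)
        = iotaMat ((a : (Matrix (Fin 2) (Fin 2) ℂ)ˣ) : Matrix (Fin 2) (Fin 2) ℂ) * zMat n ^ j →
      r u = (zeta n ^ ((j : ℤ) * w)) • sym a)
    (r' : ↥(EnGrp n) →* Matrix (Fin (k + 1)) (Fin (k + 1)) ℂ)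
    (hr' : ∀ (u : ↥(EnGrp n)) (a : ↥SU2) (j : ℕ),
      ((u : (Matrix (Fin 4) (Fin 4) ℂ)ˣ) : Matrix (Fin 4) (Fin 4) ℂ)
        = iotaMat ((a : (Matrix (Fin 2) (Fin 2) ℂ)ˣ) : Matrix (Fin 2) (Fin 2) ℂ) * zMat n ^ j →
      r' u = (zeta n ^ ((j : ℤ) * (-w))) • sym a) :
    (∃ e : ((Fin (k + 1)) → ℂ) ≃ₗ[ℂ] ((Fin (k + 1)) → ℂ),
      ∀ u u' : ↥(EnGrp n),
        JMat * ((u : (Matrix (Fin 4) (Fin 4) ℂ)ˣ) : Matrix (Fin 4) (Fin 4) ℂ)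
          = ((u' : (Matrix (Fin 4) (Fin 4) ℂ)ˣ) : Matrix (Fin 4) (Fin 4) ℂ) * JMat →
        ∀ v : (Fin (k + 1)) → ℂ, e ((r u').mulVec v) = (r' u).mulVec (e v)) ∧
    ((∃ ρ : ↥(JEnGrp n) →* Matrix (Fin (k + 1)) (Fin (k + 1)) ℂ,
        Continuous ρ ∧ ∀ (x : ↥(JEnGrp n)) (u : ↥(EnGrp n)),
          (x : (Matrix (Fin 4) (Fin 4) ℂ)ˣ) = (u : (Matrix (Fin 4) (Fin 4) ℂ)ˣ) →
          ρ x = r u) ↔ (Int.ModEq (2 * n) w 0 ∨ Int.ModEq (2 * n) w n)) := by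
  have hn0 : n ≠ 0 := by rcases hn with rfl | rfl | rfl | rfl <;> norm_num
  have hr : IsRkw n w sym r := hr
  refine ⟨⟨LinearEquiv.refl ℂ _, fun u u' h v => ?_⟩, ?_⟩
  · rw [hr.apply_eq_of_JMat_mul hn0 hr' h]
    rfl
  rw [← Int.modEq_neg_self_iff]
  refine ⟨fun ⟨ρ, _, hρ⟩ => hr.modEq_neg_of_extends hn0 hρ, fun hw => ?_⟩
  obtain ⟨ρ, hρ⟩ := Subgroup.exists_monoidHom_extend_of_relIndex_eq_two (EnGrp_le_JEnGrp n) hidx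
    (JUnit_mem_JEnGrp n) (JUnit_notMem_EnGrp hidx) (Units.ext JMat_mul_self) r
    fun h h' hJ => hr.apply_eq_of_JMat_mul hn0 (hr.neg hn0 hw) (congrArg Units.val hJ)
  exact ⟨ρ, MonoidHom.continuous_of_extends (setOf_mem_EnGrp_mem_nhds hn0 hidx) hcr hρ, hρ⟩

theorem stmt_11 (n : ℕ) (hn : n = 2 ∨ n = 3 ∨ n = 4 ∨ n = 6)
    (hidx : Subgroup.relIndex (EnGrp n) (JEnGrp n) = 2)
    (k : ℕ) (w : ℤ) (hkw : Int.ModEq 2 (k : ℤ) w)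
    (sym : ↥SU2 →* Matrix (Fin (k + 1)) (Fin (k + 1)) ℂ)
    (hcs : Continuous sym) (his : MatIrred sym)
    (r : ↥(EnGrp n) →* Matrix (Fin (k + 1)) (Fin (k + 1)) ℂ) (hcr : Continuous r)
    (hr : ∀ (u : ↥(EnGrp n)) (a : ↥SU2) (j : ℕ),
      ((u : (Matrix (Fin 4) (Fin 4) ℂ)ˣ) : Matrix (Fin 4) (Fin 4) ℂ)
        = iotaMat ((a : (Matrix (Fin 2) (Fin 2) ℂ)ˣ) : Matrix (Fin 2) (Fin 2) ℂ) * zMat n ^ j →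
      r u = (zeta n ^ ((j : ℤ) * w)) • sym a)
    (r' : ↥(EnGrp n) →* Matrix (Fin (k + 1)) (Fin (k + 1)) ℂ) (hcr' : Continuous r')
    (hr' : ∀ (u : ↥(EnGrp n)) (a : ↥SU2) (j : ℕ),
      ((u : (Matrix (Fin 4) (Fin 4) ℂ)ˣ) : Matrix (Fin 4) (Fin 4) ℂ)
        = iotaMat ((a : (Matrix (Fin 2) (Fin 2) ℂ)ˣ) : Matrix (Fin 2) (Fin 2) ℂ) * zMat n ^ j →
      r' u = (zeta n ^ ((j : ℤ) * (-w))) • sym a) :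
    (∃ e : ((Fin (k + 1)) → ℂ) ≃ₗ[ℂ] ((Fin (k + 1)) → ℂ),
      ∀ u u' : ↥(EnGrp n),
        JMat * ((u : (Matrix (Fin 4) (Fin 4) ℂ)ˣ) : Matrix (Fin 4) (Fin 4) ℂ)
          = ((u' : (Matrix (Fin 4) (Fin 4) ℂ)ˣ) : Matrix (Fin 4) (Fin 4) ℂ) * JMat →
        ∀ v : (Fin (k + 1)) → ℂ, e ((r u').mulVec v) = (r' u).mulVec (e v)) ∧
    ((∃ ρ : ↥(JEnGrp n) →* Matrix (Fin (k + 1)) (Fin (k + 1)) ℂ,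
        Continuous ρ ∧ ∀ (x : ↥(JEnGrp n)) (u : ↥(EnGrp n)),
          (x : (Matrix (Fin 4) (Fin 4) ℂ)ˣ) = (u : (Matrix (Fin 4) (Fin 4) ℂ)ˣ) →
          ρ x = r u) ↔ (Int.ModEq (2 * n) w 0 ∨ Int.ModEq (2 * n) w n)) :=
  stmt_11_general n hn hidx k w sym r hcr hr r' hr'
end
end
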